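/- Let n ≥ 3 and let K ⊆ ℝⁿ be a centrally symmetric convex polytope with nonempty interior having exactly 2m vertices, where m ≥ n. Set t = 2^{n/m}. Then Γ_{2^n}(K) ≤ m/(m + l(m, t)) ≤ m/(m + ⌊b(t)·m⌋). -/

import Mathlib

open Real Set Pointwise

/-- The covering functional `Γ_m(K)`: the infimum of all `γ > 0` such that `K` can be
covered by `m` translates of `γ • K`. -/
noncomputable def coveringFunctional {n : ℕ} (m : ℕ) (K : Set (Fin n → ℝ)) : ℝ :=
  sInf {γ : ℝ | 0 < γ ∧ ∃ C : Set (Fin n → ℝ), C.Finite ∧ C.ncard = m ∧ K ⊆ C + γ • K}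

/-- `g x = 2^x * (1+x)^(1+x) / x^x` (real powers). -/
noncomputable def g (x : ℝ) : ℝ := 2 ^ x * (1 + x) ^ (1 + x) / x ^ x

/-!
The `2m` vertices of `K` come in pairs `c ± w i`, so `K = {c + ∑ μ i • w i | ∑ |μ i| ≤ 1}`.
Put `R = m + l`. Rounding `R • μ` to an integer vector `k` with `∑ |k i| ≤ l` leaves an error of
`ℓ¹`-norm at most `m`, so `K` is covered by the translates of `(m / R) • K` centred at
`(1 - m / R) • c + R⁻¹ • ∑ k i • w i`; there are at most `2^l * C(m + l, m) ≤ t^m = 2^n` such `k`.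
For the second inequality, `C(m + j, m) m^m j^j ≤ (m + j)^(m + j)` and the monotonicity of
`x ↦ 2^x (m + x)^(m + x) / x^x`, whose value at `x = b m` is `g(b)^m m^m = t^m m^m`, give
`2^j C(m + j, m) ≤ t^m` for every integer `1 ≤ j ≤ b m`; hence `⌊b m⌋ ≤ l` by the choice of `l`.
-/

open Finset

theorem exists_le_and_sum_eq {ι : Type*} [DecidableEq ι] (s : Finset ι) (f : ι → ℕ) {c : ℕ}
    (hc : c ≤ ∑ i ∈ s, f i) : ∃ r ≤ f, ∑ i ∈ s, r i = c := by
  induction s using Finset.induction generalizing c with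
  | empty => exact ⟨0, fun _ => Nat.zero_le _, by simp_all⟩
  | insert a s ha ih =>
    rw [sum_insert ha] at hc
    obtain ⟨r, hrf, hr⟩ := ih (min_le_right c (∑ i ∈ s, f i))
    refine ⟨Function.update r a (c - min c (∑ i ∈ s, f i)), fun i => ?_, ?_⟩
    · rcases eq_or_ne i a with rfl | hi
      · simp only [Function.update_self]; omega
      · simpa [hi] using hrf i
    · rw [sum_insert ha, Function.update_self, sum_update_of_notMem ha, hr]
      omega

theorem exists_sum_natAbs_le_and_sum_abs_sub_le {ι : Type*} [Fintype ι] (μ : ι → ℝ) {l : ℕ}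
    (hμ : ∑ i, |μ i| ≤ Fintype.card ι + l) :
    ∃ k : ι → ℤ, ∑ i, (k i).natAbs ≤ l ∧ ∑ i, |μ i - k i| ≤ Fintype.card ι := by
  classical
  -- `|k i| ≤ ⌊|μ i|⌋` with the sign of `μ i` and `∑ |k i| = min l (∑ ⌊|μ i|⌋)`: either the total
  -- is `l`, or every coordinate is off by less than `1`.
  set a : ι → ℕ := fun i => ⌊|μ i|⌋₊
  obtain ⟨r, hra, hr⟩ := exists_le_and_sum_eq univ a (min_le_right l (∑ i, a i))
  have hr_le : ∀ i, (r i : ℝ) ≤ |μ i| :=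
    fun i => (Nat.cast_le.2 (hra i)).trans (Nat.floor_le (abs_nonneg _))
  refine ⟨fun i => if 0 ≤ μ i then r i else -r i, ?_, ?_⟩
  · calc ∑ i, (if 0 ≤ μ i then (r i : ℤ) else -r i).natAbs = ∑ i, r i :=
          sum_congr rfl fun i _ => by split_ifs <;> simp
      _ ≤ l := hr ▸ min_le_left _ _
  have habs : ∀ i, |μ i - ((if 0 ≤ μ i then (r i : ℤ) else -r i : ℤ) : ℝ)| = |μ i| - r i := by
    intro i
    have := hr_le i
    split_ifs with h
    · rw [abs_of_nonneg h] at this ⊢; push_cast; rw [abs_of_nonneg (by linarith)]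
    · rw [abs_of_neg (not_le.1 h)] at this ⊢; push_cast; rw [abs_of_nonpos (by linarith)]; ring
  rw [sum_congr rfl fun i _ => habs i, sum_sub_distrib, ← Nat.cast_sum, hr]
  rcases le_total l (∑ i, a i) with h | h
  · rw [min_eq_left h]; linarith
  · rw [min_eq_right h, Nat.cast_sum, ← sum_sub_distrib]
    calc ∑ i, (|μ i| - a i) ≤ ∑ _i : ι, (1 : ℝ) :=
          sum_le_sum fun i _ => by linarith [Nat.lt_floor_add_one |μ i|]
      _ = Fintype.card ι := by simp

section LatticeBall

variable (ι : Type*) [Fintype ι] [DecidableEq ι]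

noncomputable def latticeBall (l : ℕ) : Finset (ι → ℤ) :=
  {k ∈ Fintype.piFinset fun _ => Icc (-(l : ℤ)) l | ∑ i, (k i).natAbs ≤ l}

variable {ι}

theorem mem_latticeBall {l : ℕ} {k : ι → ℤ} : k ∈ latticeBall ι l ↔ ∑ i, (k i).natAbs ≤ l := by
  refine ⟨fun h => (mem_filter.1 h).2,
    fun h => mem_filter.2 ⟨Fintype.mem_piFinset.2 fun i => ?_, h⟩⟩
  have := (single_le_sum (fun j _ => Nat.zero_le _) (mem_univ i)).trans h
  rw [Finset.mem_Icc]; omega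

theorem card_piAntidiag_univ (j : ℕ) :
    #(piAntidiag (univ : Finset ι) j) = (Fintype.card ι).multichoose j := by
  rw [← map_sym_eq_piAntidiag, card_map]
  simp [Sym.card_sym_eq_multichoose]

theorem card_latticeBall_le (l : ℕ) :
    #(latticeBall ι l) ≤ 2 ^ l * (Fintype.card ι + l).choose (Fintype.card ι) := by
  -- `k` is determined by `|k|`, a point of `ℕ^ι` with coordinate sum `j ≤ l`, and a sign on each
  -- of its at most `j` nonzero coordinates.
  have hsub : latticeBall ι l ⊆ (range (l + 1)).biUnion fun j =>
      (piAntidiag univ j).biUnion fun a => Fintype.piFinset fun i => {(a i : ℤ), -(a i : ℤ)} := by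
    intro k hk
    simp only [Finset.mem_biUnion, Finset.mem_range, mem_piAntidiag, Fintype.mem_piFinset,
      Finset.mem_insert, Finset.mem_singleton]
    exact ⟨_, Nat.lt_succ_of_le (mem_latticeBall.1 hk), fun i => (k i).natAbs,
      ⟨rfl, by simp⟩, fun i => by simp only; omega⟩
  have hfibre : ∀ j ≤ l, ∀ a ∈ piAntidiag (univ : Finset ι) j,
      #(Fintype.piFinset fun i => ({(a i : ℤ), -(a i : ℤ)} : Finset ℤ)) ≤ 2 ^ l := by
    intro j hj a ha
    rw [Fintype.card_piFinset]
    calc ∏ i, #({(a i : ℤ), -(a i : ℤ)} : Finset ℤ) ≤ ∏ i, 2 ^ a i := by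
          gcongr with i
          rcases Nat.eq_zero_or_pos (a i) with h | h
          · simp [h]
          · exact card_le_two.trans (Nat.le_self_pow h.ne' 2)
      _ = 2 ^ j := by rw [prod_pow_eq_pow_sum, (mem_piAntidiag.1 ha).1]
      _ ≤ 2 ^ l := Nat.pow_le_pow_right two_pos hj
  calc #(latticeBall ι l) ≤ ∑ j ∈ range (l + 1), ∑ a ∈ piAntidiag univ j, 2 ^ l := by
        refine (Finset.card_le_card hsub).trans (card_biUnion_le.trans (sum_le_sum fun j hj => ?_))
        exact card_biUnion_le.trans
          (sum_le_sum (hfibre j (Nat.lt_succ_iff.1 (Finset.mem_range.1 hj))))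
    _ = 2 ^ l * (Fintype.card ι + l).choose (Fintype.card ι) := by
        simp only [sum_const, smul_eq_mul, ← sum_mul, card_piAntidiag_univ]
        rw [Nat.sum_range_multichoose, add_comm l, mul_comm]

end LatticeBall

section CrossPolytope

variable {E ι : Type*} [AddCommGroup E] [Module ℝ E] [Fintype ι]

def crossPolytope (c : E) (w : ι → E) : Set E :=
  {x | ∃ μ : ι → ℝ, ∑ i, |μ i| ≤ 1 ∧ x = c + ∑ i, μ i • w i}

theorem convex_crossPolytope (c : E) (w : ι → E) : Convex ℝ (crossPolytope c w) := by
  rintro _ ⟨μ, hμ, rfl⟩ _ ⟨ν, hν, rfl⟩ p q hp hq hpq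
  refine ⟨p • μ + q • ν, ?_, ?_⟩
  · calc ∑ i, |(p • μ + q • ν) i| ≤ ∑ i, (p * |μ i| + q * |ν i|) := sum_le_sum fun i _ => by
          simpa [abs_mul, abs_of_nonneg hp, abs_of_nonneg hq] using abs_add_le (p * μ i) (q * ν i)
      _ = p * ∑ i, |μ i| + q * ∑ i, |ν i| := by rw [sum_add_distrib, mul_sum, mul_sum]
      _ ≤ p * 1 + q * 1 := by gcongr
      _ = 1 := by rw [mul_one, mul_one, hpq]
  · simp only [Pi.add_apply, Pi.smul_apply, smul_eq_mul, add_smul, mul_smul, sum_add_distrib,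
      smul_add, ← smul_sum]
    rw [add_add_add_comm, ← add_smul, hpq, one_smul]

theorem crossPolytope_subset {K : Set E} (hK : Convex ℝ K) {c : E} {w : ι → E} (hc : c ∈ K)
    (hw : ∀ i, c + w i ∈ K ∧ c - w i ∈ K) : crossPolytope c w ⊆ K := by
  classical
  rintro _ ⟨μ, hμ, rfl⟩
  set vertex : ι → E := fun i => if 0 ≤ μ i then c + w i else c - w i
  have hvertex : ∀ i, |μ i| • vertex i = |μ i| • c + μ i • w i := by
    intro i
    by_cases h : 0 ≤ μ i
    · simp [vertex, h, abs_of_nonneg h, smul_add]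
    · simp [vertex, h, abs_of_neg (not_le.1 h), smul_sub]
  have hmem := hK.sum_mem (t := univ) (w := fun o : Option ι => o.elim (1 - ∑ i, |μ i|) (|μ ·|))
    (z := fun o => o.elim c vertex) (by rintro (_ | i) - <;> simp [hμ])
    (by simp [Fintype.sum_option])
    (by rintro (_ | i) - <;> simp [hc, vertex]; split_ifs <;> simp [hw])
  convert hmem using 1
  simp only [Fintype.sum_option, Option.elim, hvertex, sum_add_distrib, ← sum_smul]
  module

theorem add_mem_crossPolytope (c : E) (w : ι → E) (i : ι) : c + w i ∈ crossPolytope c w := by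
  classical
  exact ⟨Pi.single i 1, by simp [Pi.single_apply, apply_ite], by simp [Pi.single_apply, ite_smul]⟩

theorem sub_mem_crossPolytope (c : E) (w : ι → E) (i : ι) : c - w i ∈ crossPolytope c w := by
  classical
  exact ⟨-Pi.single i 1, by simp [Pi.single_apply, apply_ite],
    by simp [Pi.single_apply, ite_smul, sub_eq_add_neg]⟩

theorem exists_finset_crossPolytope_subset_add_smul [Nonempty ι] [DecidableEq ι] (c : E)
    (w : ι → E) (l : ℕ) :
    ∃ C : Finset E, #C ≤ #(latticeBall ι l) ∧
      crossPolytope c w ⊆ (C : Set E) + ((Fintype.card ι : ℝ) / (Fintype.card ι + l)) •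
        crossPolytope c w := by
  classical
  set N : ℝ := (Fintype.card ι : ℝ)
  set R : ℝ := N + l
  have hN : 0 < N := by simp [N, Fintype.card_pos]
  have hR : 0 < R := by positivity
  refine ⟨(latticeBall ι l).image fun k => (1 - N / R) • c + R⁻¹ • ∑ i, (k i : ℝ) • w i,
    card_image_le, ?_⟩
  rintro _ ⟨μ, hμ, rfl⟩
  -- the remainder `(R • μ - k) / N` of a rounding `k` of `R • μ` lies in the unit `ℓ¹`-ball
  obtain ⟨k, hk, hdist⟩ := exists_sum_natAbs_le_and_sum_abs_sub_le (R • μ) (l := l) (by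
    simpa [abs_mul, abs_of_pos hR, ← mul_sum] using mul_le_of_le_one_right hR.le hμ)
  set ν : ι → ℝ := fun i => (R * μ i - k i) / N
  have hν : ∑ i, |ν i| ≤ 1 := by
    simpa [ν, abs_div, abs_of_pos hN, ← sum_div, div_le_one hN] using hdist
  refine mem_add.2 ⟨_, mem_image_of_mem _ (mem_latticeBall.2 hk), _,
    smul_mem_smul_set ⟨ν, hν, rfl⟩, ?_⟩
  have hcoef : ∀ i, R⁻¹ * k i + N / R * ν i = μ i := fun i => by
    simp only [ν]; field_simp; ring
  simp only [smul_add, smul_sum, smul_smul, ← hcoef, add_smul, sum_add_distrib]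
  module

end CrossPolytope

theorem coveringFunctional_le {n N : ℕ} (hn : n ≠ 0) {K : Set (Fin n → ℝ)} {γ : ℝ} (hγ : 0 < γ)
    (C : Finset (Fin n → ℝ)) (hC : #C ≤ N) (hK : K ⊆ (C : Set (Fin n → ℝ)) + γ • K) :
    coveringFunctional N K ≤ γ := by
  have : NeZero n := ⟨hn⟩
  obtain ⟨C', hCC', hC'⟩ := Infinite.exists_superset_card_eq C N hC
  refine csInf_le ⟨0, fun _ h => h.1.le⟩ ⟨hγ, C', C'.finite_toSet, by rwa [ncard_coe_finset], ?_⟩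
  exact hK.trans (add_subset_add_right (by exact_mod_cast hCC'))

theorem exists_fin_representatives_of_involution {α : Type*} [DecidableEq α] (f : α → α)
    {m : ℕ} {s : Finset α}
    (hf : ∀ x ∈ s, f x ∈ s) (hinv : ∀ x ∈ s, f (f x) = x) (hfix : ∀ x ∈ s, f x ≠ x)
    (hs : #s = 2 * m) : ∃ v : Fin m → α, (∀ i, v i ∈ s) ∧ ∀ x ∈ s, ∃ i, x = v i ∨ x = f (v i) := by
  induction m generalizing s with
  | zero => exact ⟨finZeroElim, finZeroElim, by simp_all⟩
  | succ m ih =>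
    obtain ⟨a, ha⟩ := card_pos.1 (by omega : 0 < #s)
    have hfa : f a ∈ s.erase a := Finset.mem_erase.2 ⟨hfix a ha, hf a ha⟩
    set s' := (s.erase a).erase (f a)
    have hs' : ∀ x, x ∈ s' ↔ x ∈ s ∧ x ≠ a ∧ x ≠ f a := by
      simp only [s', Finset.mem_erase]; tauto
    obtain ⟨v, hvs', hcover⟩ := ih (s := s')
      (fun x hx => by
        obtain ⟨hxs, hxa, hxfa⟩ := (hs' x).1 hx
        refine (hs' _).2 ⟨hf x hxs, fun h => hxfa ?_, fun h => hxa ?_⟩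
        · rw [← hinv x hxs, h]
        · rw [← hinv x hxs, h, hinv a ha])
      (fun x hx => hinv x ((hs' x).1 hx).1) (fun x hx => hfix x ((hs' x).1 hx).1)
      (by rw [card_erase_of_mem hfa, card_erase_of_mem ha, hs]; omega)
    refine ⟨Fin.cons a v, Fin.cases ha fun i => ((hs' _).1 (hvs' i)).1, fun x hx => ?_⟩
    by_cases hxa : x = a
    · exact ⟨0, .inl hxa⟩
    by_cases hxfa : x = f a
    · exact ⟨0, .inr hxfa⟩
    obtain ⟨i, hi⟩ := hcover x ((hs' x).2 ⟨hx, hxa, hxfa⟩)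
    exact ⟨i.succ, by simpa using hi⟩

section SymmetricPolytope

variable {E : Type*} [AddCommGroup E] [Module ℝ E] {K : Set E} {c : E}

theorem sub_mem_extremePoints_of_symmetric (hK : ∀ x, x ∈ K ↔ c + c - x ∈ K) {x : E}
    (hx : x ∈ extremePoints ℝ K) : c + c - x ∈ extremePoints ℝ K := by
  refine ⟨(hK x).1 hx.1, fun x₁ h₁ x₂ h₂ hseg => ?_⟩
  obtain ⟨a, b, ha, hb, hab, hsum⟩ := hseg
  have hx' : x ∈ openSegment ℝ (c + c - x₁) (c + c - x₂) := by
    refine ⟨a, b, ha, hb, hab, ?_⟩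
    calc a • (c + c - x₁) + b • (c + c - x₂) = (a + b) • (c + c) - (a • x₁ + b • x₂) := by module
      _ = x := by rw [hab, hsum, one_smul, sub_sub_cancel]
  rw [← hx.2 ((hK x₁).1 h₁) ((hK x₂).1 h₂) hx', sub_sub_cancel]

theorem subset_singleton_of_center_mem_extremePoints (hK : ∀ x, x ∈ K ↔ c + c - x ∈ K)
    (hc : c ∈ extremePoints ℝ K) : K ⊆ {c} := fun x hx =>
  hc.2 hx ((hK x).1 hx) ⟨1 / 2, 1 / 2, by norm_num, by norm_num, by norm_num, by module⟩

theorem convexHull_extremePoints_convexHull_finset [TopologicalSpace E] [T2Space E]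
    [IsTopologicalAddGroup E] [ContinuousSMul ℝ E] [LocallyConvexSpace ℝ E] (V : Finset E) :
    convexHull ℝ (extremePoints ℝ (convexHull ℝ (V : Set E))) = convexHull ℝ V := by
  have hfin := V.finite_toSet.subset (extremePoints_convexHull_subset (𝕜 := ℝ))
  rw [← (hfin.isCompact_convexHull (𝕜 := ℝ)).isClosed.closure_eq,
    closure_convexHull_extremePoints (V.finite_toSet.isCompact_convexHull (𝕜 := ℝ))
      (convex_convexHull ℝ _)]

theorem exists_eq_crossPolytope [TopologicalSpace E] [T2Space E] [IsTopologicalAddGroup E]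
    [ContinuousSMul ℝ E] [LocallyConvexSpace ℝ E] {V : Finset E}
    (hKV : K = convexHull ℝ (V : Set E)) (hsym : ∀ x, x ∈ K ↔ c + c - x ∈ K) {m : ℕ}
    (hm : 0 < m) (hvert : (extremePoints ℝ K).ncard = 2 * m) :
    ∃ w : Fin m → E, K = crossPolytope c w := by
  classical
  have hconv : Convex ℝ K := by rw [hKV]; exact convex_convexHull ℝ _
  have hPfin : (extremePoints ℝ K).Finite := finite_of_ncard_ne_zero (by omega)
  have hcP : c ∉ extremePoints ℝ K := fun hc => by
    have := ncard_le_ncard ((extremePoints_subset (𝕜 := ℝ)).trans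
      (subset_singleton_of_center_mem_extremePoints hsym hc)) (finite_singleton c)
    rw [ncard_singleton] at this
    omega
  obtain ⟨v, hvP, hcover⟩ := exists_fin_representatives_of_involution (fun x => c + c - x)
    (s := hPfin.toFinset)
    (fun x hx => by simpa using sub_mem_extremePoints_of_symmetric hsym (by simpa using hx))
    (fun x _ => sub_sub_cancel _ _)
    (fun x hx hfix => by
      have hxc : x = c := smul_right_injective E (two_ne_zero' ℝ) (by
        simp only [two_smul]
        nth_rewrite 1 [← hfix]
        abel)
      exact hcP (hxc ▸ by simpa using hx))
    (by rw [← ncard_eq_toFinset_card _ hPfin, hvert])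
  have hvK : ∀ i, v i ∈ K := fun i => extremePoints_subset (by simpa using hvP i)
  refine ⟨fun i => v i - c, subset_antisymm ?_ ?_⟩
  · have hKP : convexHull ℝ (extremePoints ℝ K) = K := by
      rw [hKV, convexHull_extremePoints_convexHull_finset]
    rw [← hKP]
    refine convexHull_min (fun x hx => ?_) (convex_crossPolytope _ _)
    obtain ⟨i, rfl | rfl⟩ := hcover x (by simpa using hx)
    · simpa using add_mem_crossPolytope c (fun i => v i - c) i
    · simpa [sub_sub_eq_add_sub, add_sub_assoc] using sub_mem_crossPolytope c (fun i => v i - c) i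
  · have hcK : c ∈ K := by
      convert hconv (hvK ⟨0, hm⟩) ((hsym _).1 (hvK ⟨0, hm⟩)) (by norm_num : (0 : ℝ) ≤ 1 / 2)
        (by norm_num : (0 : ℝ) ≤ 1 / 2) (by norm_num) using 1
      module
    refine crossPolytope_subset hconv hcK fun i => ⟨by simpa using hvK i, ?_⟩
    simpa [sub_sub_eq_add_sub, add_sub_assoc] using (hsym _).1 (hvK i)

end SymmetricPolytope

noncomputable def gScaled (M x : ℝ) : ℝ := 2 ^ x * (M + x) ^ (M + x) / x ^ x

theorem gScaled_eq_exp {M x : ℝ} (hM : 0 ≤ M) (hx : 0 < x) :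
    gScaled M x = exp (x * log 2 + (M + x) * log (M + x) - x * log x) := by
  rw [gScaled, rpow_def_of_pos two_pos, rpow_def_of_pos (by linarith), rpow_def_of_pos hx,
    exp_sub, exp_add]
  ring_nf

theorem monotoneOn_gScaled {M : ℝ} (hM : 0 ≤ M) : MonotoneOn (gScaled M) (Ioi 0) := by
  set F : ℝ → ℝ := fun x => x * log 2 + (M + x) * log (M + x) - x * log x
  have hF : ∀ x > 0, HasDerivAt F (log 2 + (log (M + x) + 1) - (log x + 1)) x := by
    intro x hx
    have h2 : HasDerivAt (fun y => (M + y) * log (M + y)) ((log (M + x) + 1) * 1) x :=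
      (hasDerivAt_mul_log (by linarith : M + x ≠ 0)).comp x ((hasDerivAt_id x).const_add M)
    have h := (((hasDerivAt_id x).mul_const (log 2)).add h2).sub (hasDerivAt_mul_log hx.ne')
    simp only [id, one_mul, mul_one] at h
    exact h
  have hFmono : MonotoneOn F (Ioi 0) := by
    refine monotoneOn_of_deriv_nonneg (convex_Ioi 0)
      (fun x hx => (hF x hx).continuousAt.continuousWithinAt)
      (fun x hx => (hF x (interior_subset hx)).differentiableAt.differentiableWithinAt)
      fun x hx => ?_
    rw [interior_Ioi] at hx
    rw [(hF x hx).deriv]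
    have := log_le_log hx (by linarith : x ≤ M + x)
    have := log_nonneg (by norm_num : (1 : ℝ) ≤ 2)
    linarith
  intro x hx y hy hxy
  rw [gScaled_eq_exp hM hx, gScaled_eq_exp hM hy]
  exact exp_le_exp.2 (hFmono hx hy hxy)

theorem gScaled_mul {M b : ℝ} (hM : 0 < M) (hb : 0 < b) :
    gScaled M (b * M) = g b ^ M * M ^ M := by
  have hg : g b = gScaled 1 b := rfl
  rw [hg, gScaled_eq_exp hM.le (by positivity), gScaled_eq_exp zero_le_one hb, ← exp_mul,
    rpow_def_of_pos hM, ← exp_add, show M + b * M = M * (1 + b) by ring,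
    log_mul hM.ne' (by linarith), log_mul hb.ne' hM.ne']
  ring_nf

theorem choose_mul_pow_mul_pow_le (m j : ℕ) :
    (m + j).choose m * (m ^ m * j ^ j) ≤ (m + j) ^ (m + j) := by
  rw [add_pow]
  calc (m + j).choose m * (m ^ m * j ^ j) = m ^ m * j ^ (m + j - m) * (m + j).choose m := by
        rw [Nat.add_sub_cancel_left]; ring
    _ ≤ _ := Finset.single_le_sum (f := fun k => m ^ k * j ^ (m + j - k) * (m + j).choose k)
        (fun _ _ => Nat.zero_le _) (Finset.mem_range.2 (by omega))

theorem two_pow_mul_choose_mul_pow_mul_pow_le_gScaled (m : ℕ) {j : ℕ} (hj : 0 < j) :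
    2 ^ j * (m + j).choose m * (m : ℝ) ^ m ≤ gScaled m j := by
  have hj' : (0 : ℝ) < j := by exact_mod_cast hj
  have key : ((m + j).choose m : ℝ) * ((m : ℝ) ^ m * (j : ℝ) ^ j) ≤ ((m : ℝ) + j) ^ (m + j) := by
    exact_mod_cast choose_mul_pow_mul_pow_le m j
  rw [gScaled, ← Nat.cast_add, rpow_natCast, rpow_natCast, rpow_natCast,
    le_div_iff₀ (by positivity)]
  push_cast
  calc _ = 2 ^ j * (((m + j).choose m : ℝ) * ((m : ℝ) ^ m * (j : ℝ) ^ j)) := by ring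
    _ ≤ _ := by gcongr

theorem floor_mul_le_of_g_pow_lt {m l : ℕ} (hm : 0 < m) {b : ℝ} (hb : 0 < b)
    (h : g b ^ m < 2 ^ (l + 1) * (m + l + 1).choose m) : ⌊b * m⌋₊ ≤ l := by
  have hM : (0 : ℝ) < m := by exact_mod_cast hm
  by_contra! hl
  have hlb : ((l + 1 : ℕ) : ℝ) ≤ b * m := by
    exact_mod_cast (Nat.le_floor_iff (by positivity)).1 hl
  have := calc (2 : ℝ) ^ (l + 1) * (m + l + 1).choose m * (m : ℝ) ^ m
      ≤ gScaled m (l + 1 : ℕ) := two_pow_mul_choose_mul_pow_mul_pow_le_gScaled m l.succ_pos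
    _ ≤ gScaled m (b * m) :=
        monotoneOn_gScaled hM.le (by simp; positivity) (by simp; positivity) hlb
    _ = g b ^ m * (m : ℝ) ^ m := by rw [gScaled_mul hM hb, rpow_natCast, rpow_natCast]
  have := le_of_mul_le_mul_right this (by positivity)
  linarith

theorem coveringFunctional_symmetric_polytope_le_general (n m : ℕ) (hn : 3 ≤ n) (hm : n ≤ m)
    (K : Set (Fin n → ℝ))
    (hpoly : ∃ V : Finset (Fin n → ℝ), K = convexHull ℝ (V : Set (Fin n → ℝ)))
    (hsym : ∃ c : Fin n → ℝ, ∀ x, x ∈ K ↔ c + c - x ∈ K)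
    (hvert : (Set.extremePoints ℝ K).ncard = 2 * m)
    (t : ℝ) (ht : t = (2 : ℝ) ^ ((n : ℝ) / (m : ℝ)))
    (b : ℝ) (hb : 0 < b) (hgb : g b = t)
    (l : ℕ) (hl1 : (2 ^ l * (m + l).choose m : ℝ) ≤ t ^ m)
    (hl2 : t ^ m < (2 ^ (l + 1) * (m + l + 1).choose m : ℝ)) :
    coveringFunctional (2 ^ n) K ≤ (m : ℝ) / ((m : ℝ) + l) ∧
      (m : ℝ) / ((m : ℝ) + l) ≤ (m : ℝ) / ((m : ℝ) + (⌊b * (m : ℝ)⌋₊ : ℝ)) := by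
  obtain ⟨V, hV⟩ := hpoly
  obtain ⟨c, hc⟩ := hsym
  have hm0 : 0 < m := by omega
  have : Nonempty (Fin m) := ⟨⟨0, hm0⟩⟩
  obtain ⟨w, rfl⟩ := exists_eq_crossPolytope hV hc hm0 hvert
  obtain ⟨C, hC, hcover⟩ := exists_finset_crossPolytope_subset_add_smul c w l
  have htm : t ^ m = 2 ^ n := by
    rw [ht, ← rpow_natCast, ← rpow_mul zero_le_two, div_mul_cancel₀ _ (by positivity),
      rpow_natCast]
  have hCn : #C ≤ 2 ^ n := by
    have hball := card_latticeBall_le (ι := Fin m) l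
    rw [Fintype.card_fin] at hball
    exact hC.trans (hball.trans (by exact_mod_cast htm ▸ hl1))
  rw [Fintype.card_fin] at hcover
  refine ⟨coveringFunctional_le (by omega) (by positivity) C hCn hcover, ?_⟩
  have hfloor : ⌊b * m⌋₊ ≤ l := floor_mul_le_of_g_pow_lt hm0 hb (by rwa [hgb])
  gcongr

/-- Let `n ≥ 3` and `K ⊆ ℝⁿ` be a centrally symmetric convex polytope with nonempty
interior having exactly `2m` vertices, `m ≥ n`. Let `t = 2^(n/m)`, `b = b(t)` the
positive solution of `g b = t`, and `l = l(m,t)` the nonnegative integer with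
`2^l·C(m+l, m) ≤ t^m < 2^(l+1)·C(m+l+1, m)`. Then
`Γ_{2^n}(K) ≤ m/(m+l) ≤ m/(m+⌊b·m⌋)`. -/
theorem coveringFunctional_symmetric_polytope_le (n m : ℕ) (hn : 3 ≤ n) (hm : n ≤ m)
    (K : Set (Fin n → ℝ))
    (hpoly : ∃ V : Finset (Fin n → ℝ), K = convexHull ℝ (V : Set (Fin n → ℝ)))
    (hint : (interior K).Nonempty)
    (hsym : ∃ c : Fin n → ℝ, ∀ x, x ∈ K ↔ c + c - x ∈ K)
    (hvert : (Set.extremePoints ℝ K).ncard = 2 * m)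
    (t : ℝ) (ht : t = (2 : ℝ) ^ ((n : ℝ) / (m : ℝ)))
    (b : ℝ) (hb : 0 < b) (hgb : g b = t)
    (l : ℕ) (hl1 : (2 ^ l * (m + l).choose m : ℝ) ≤ t ^ m)
    (hl2 : t ^ m < (2 ^ (l + 1) * (m + l + 1).choose m : ℝ)) :
    coveringFunctional (2 ^ n) K ≤ (m : ℝ) / ((m : ℝ) + l) ∧
      (m : ℝ) / ((m : ℝ) + l) ≤ (m : ℝ) / ((m : ℝ) + (⌊b * (m : ℝ)⌋₊ : ℝ)) :=
  coveringFunctional_symmetric_polytope_le_general n m hn hm K hpoly hsym hvert t ht b hb hgb l hl1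
    hl2
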